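/- Let L, X, Y be as in the Riesz–Kantorovich theorem (X directed with RDP, Y a Dedekind complete sequentially P-Archimedean L-vector lattice). For an increasing net (T_α) in L_b(X,Y) and T ∈ L_b(X,Y), one has T_α ↑ T in L_b(X,Y) if and only if T_α(x) ↑ T(x) in Y for every x ∈ X⁺. -/

import Mathlib

/-!
The reverse implication is pointwise. Conversely, suppose `T_α ↑ S` in `L_b(X,Y)`. Dedekind
completeness of `Y` gives the pointwise suprema `r x = sup_α T_α x` on `X⁺` (bounded by `S x`),
and directedness makes `r` additive. It is also `L⁺`-homogeneous, because multiplication by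
`l ≥ 0` is order continuous on `Y`: if `π_n` is the component of `1` in the band generated by
`(l - n)⁺`, then `(1 - π_n) l ≤ n` and `π_n ↓ 0`, so a `w ≥ 0` lying below every `l • (s - y_α)`
satisfies `w = π_n • w` for all `n`, and the sequential P-Archimedean property forces `w = 0`.
Since `X = X⁺ - X⁺`, `r` extends to an `L`-linear map `R`. It lies between `T_α` and `S` on `X⁺`,
so it is order bounded, hence `S ≤ R`, i.e. `S x = r x` on `X⁺`.
-/

/-- A Dedekind complete unital `f`-algebra over the reals. -/
class DFAlgebra (L : Type*) extends CommRing L, Lattice L, Algebra ℝ L where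
  add_le_add_left : ∀ a b : L, a ≤ b → ∀ c : L, c + a ≤ c + b
  mul_nonneg : ∀ a b : L, 0 ≤ a → 0 ≤ b → 0 ≤ a * b
  f_prop : ∀ a b c : L, a ⊓ b = 0 → 0 ≤ c → (c * a) ⊓ b = 0
  algebraMap_nonneg : ∀ r : ℝ, 0 ≤ r → 0 ≤ Algebra.algebraMap ℝ L r
  dedekind : ∀ S : Set L, S.Nonempty → BddAbove S → ∃ a : L, IsLUB S a

/-- A partially ordered `L`-module. -/
class POModule (L : Type*) [DFAlgebra L] (X : Type*) extends
    AddCommGroup X, Module L X, PartialOrder X where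
  add_le_add_left : ∀ a b : X, a ≤ b → ∀ c : X, c + a ≤ c + b
  smul_le_smul : ∀ l : L, 0 ≤ l → ∀ a b : X, a ≤ b → l • a ≤ l • b
/-- An L-vector lattice: a PO L-module whose order is a lattice order. -/
class LVectorLattice (L : Type*) [DFAlgebra L] (X : Type*) extends
    AddCommGroup X, Module L X, Lattice X where
  add_le_add_left : ∀ a b : X, a ≤ b → ∀ c : X, c + a ≤ c + b
  smul_le_smul : ∀ l : L, 0 ≤ l → ∀ a b : X, a ≤ b → l • a ≤ l • b

section Lb

variable (L X Y : Type*) [DFAlgebra L] [POModule L X] [LVectorLattice L Y]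

/-- An operator is order-bounded if it maps order intervals into order
intervals. -/
def OrderBounded (S : X →ₗ[L] Y) : Prop :=
  ∀ a b : X, ∃ c d : Y, ∀ z : X, a ≤ z → z ≤ b → c ≤ S z ∧ S z ≤ d

/-- The order-bounded operators from X to Y. -/
abbrev Lb := {S : X →ₗ[L] Y // OrderBounded L X Y S}

/-- L_b(X,Y) is ordered by the cone of positive operators. -/
instance : Preorder (Lb L X Y) where
  le S T := ∀ x : X, 0 ≤ x → S.1 x ≤ T.1 x
  le_refl S x _ := le_refl _
  le_trans S T U hST hTU x hx := le_trans (hST x hx) (hTU x hx)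

instance : Zero (Lb L X Y) :=
  ⟨⟨0, fun _ _ => ⟨0, 0, fun z _ _ => by simp⟩⟩⟩

end Lb

open Set

section DFAlgebra

variable {L : Type*} [DFAlgebra L]

instance : IsOrderedAddMonoid L where
  add_le_add_left a b h c := by simpa only [add_comm _ c] using DFAlgebra.add_le_add_left a b h c

instance : ZeroLEOneClass L where
  zero_le_one := by simpa using DFAlgebra.algebraMap_nonneg (L := L) 1 zero_le_one

instance : IsOrderedRing L := IsOrderedRing.of_mul_nonneg DFAlgebra.mul_nonneg

theorem le_zero_of_forall_nsmul_le {b c : L} (h : ∀ n : ℕ, n • b ≤ c) : b ≤ 0 := by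
  obtain ⟨s, hs⟩ := DFAlgebra.dedekind (range fun n : ℕ => n • b) (range_nonempty _)
    ⟨c, by rintro _ ⟨n, rfl⟩; exact h n⟩
  have hsb : s ≤ s - b := hs.2 <| by
    rintro _ ⟨n, rfl⟩
    exact le_sub_iff_add_le.2 (by simpa only [succ_nsmul] using hs.1 ⟨n + 1, rfl⟩)
  simpa using hsb

theorem exists_nonneg_mul_natCast_eq_one {n : ℕ} (hn : n ≠ 0) :
    ∃ c : L, 0 ≤ c ∧ c * n = 1 := by
  refine ⟨algebraMap ℝ L (n : ℝ)⁻¹, DFAlgebra.algebraMap_nonneg _ (by positivity), ?_⟩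
  rw [← map_natCast (algebraMap ℝ L) n, ← map_mul, inv_mul_cancel₀ (Nat.cast_ne_zero.2 hn),
    map_one]

theorem inf_add_eq_zero {x a b : L} (ha : x ⊓ a = 0) (hb : x ⊓ b = 0) : x ⊓ (a + b) = 0 := by
  have hx : 0 ≤ x := ha ▸ inf_le_left
  have ha₀ : 0 ≤ a := ha ▸ inf_le_right
  have hb₀ : 0 ≤ b := hb ▸ inf_le_right
  refine le_antisymm ?_ (le_inf hx (add_nonneg ha₀ hb₀))
  have : x ⊓ (a + b) ≤ b :=
    calc x ⊓ (a + b) ≤ (x + b) ⊓ (a + b) := inf_le_inf_right _ (le_add_of_nonneg_right hb₀)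
      _ = b := by rw [← inf_add, ha, zero_add]
  exact hb ▸ le_inf inf_le_left this

theorem inf_nsmul_eq_zero {x a : L} (h : x ⊓ a = 0) (n : ℕ) : x ⊓ n • a = 0 := by
  induction n with
  | zero => simpa using (h ▸ inf_le_left : 0 ≤ x)
  | succ n ih => rw [succ_nsmul]; exact inf_add_eq_zero ih h

theorem inf_le_zero_of_isLUB {A : Set L} {s x : L} (hs : IsLUB A s) (h : ∀ a ∈ A, x ⊓ a = 0) :
    x ⊓ s ≤ 0 := by
  have hsx : s ≤ s ⊔ x - x := hs.2 fun a ha => by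
    rw [le_sub_iff_add_le, ← inf_add_sup a x, inf_comm, h a ha, zero_add]
    exact sup_le_sup_right (hs.1 ha) x
  rw [le_sub_iff_add_le, ← inf_add_sup s x] at hsx
  simpa [inf_comm] using hsx

theorem mul_eq_zero_of_inf_eq_zero {a b : L} (h : a ⊓ b = 0) : a * b = 0 := by
  have ha : 0 ≤ a := h ▸ inf_le_left
  have hb : 0 ≤ b := h ▸ inf_le_right
  -- by the f-algebra property `a * b` is disjoint from `a + b`, hence from `(a + b) ^ 2 ≥ a * b`
  have hab : a * b ⊓ (a + b) = 0 :=
    inf_add_eq_zero (DFAlgebra.f_prop b a a (inf_comm a b ▸ h) ha)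
      (mul_comm b a ▸ DFAlgebra.f_prop a b b h hb)
  have hsq := DFAlgebra.f_prop (a + b) (a * b) (a + b) (inf_comm (a * b) _ ▸ hab)
    (add_nonneg ha hb)
  have hle : a * b ≤ (a + b) * (a + b) := by
    rw [show (a + b) * (a + b) = a * b + (a * a + (a * b + b * b)) by ring]
    exact le_add_of_nonneg_right <| by positivity
  exact le_antisymm (inf_idem (a * b) ▸ hsq ▸ inf_le_inf_right _ hle) (mul_nonneg ha hb)

theorem exists_isLUB_nsmul_inf_one (a : L) : ∃ e, IsLUB (range fun k : ℕ => k • a ⊓ 1) e :=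
  DFAlgebra.dedekind _ (range_nonempty _) ⟨1, by rintro _ ⟨k, rfl⟩; exact inf_le_right⟩

/-- For `0 ≤ a`, the component of `1` in the band generated by `a`. -/
noncomputable def bandUnit (a : L) : L := (exists_isLUB_nsmul_inf_one a).choose

theorem isLUB_bandUnit (a : L) : IsLUB (range fun k : ℕ => k • a ⊓ 1) (bandUnit a) :=
  (exists_isLUB_nsmul_inf_one a).choose_spec

theorem bandUnit_nonneg (a : L) : 0 ≤ bandUnit a := by
  simpa using (isLUB_bandUnit a).1 ⟨0, rfl⟩

theorem bandUnit_le_one (a : L) : bandUnit a ≤ 1 :=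
  (isLUB_bandUnit a).2 <| by rintro _ ⟨k, rfl⟩; exact inf_le_right

theorem bandUnit_mono : Monotone (bandUnit : L → L) := fun a b hab =>
  (isLUB_bandUnit a).2 <| by
    rintro _ ⟨k, rfl⟩
    exact (inf_le_inf_right _ (nsmul_le_nsmul_right hab k)).trans
      ((isLUB_bandUnit b).1 ⟨k, rfl⟩)

theorem inf_bandUnit_eq_zero {x a : L} (h : x ⊓ a = 0) : x ⊓ bandUnit a = 0 := by
  have hx : 0 ≤ x := h ▸ inf_le_left
  refine le_antisymm (inf_le_zero_of_isLUB (isLUB_bandUnit a) ?_) (le_inf hx (bandUnit_nonneg a))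
  rintro _ ⟨k, rfl⟩
  refine le_antisymm ?_ (le_inf hx (le_inf (nsmul_nonneg (h ▸ inf_le_right) k) zero_le_one))
  exact inf_nsmul_eq_zero h k ▸ inf_le_inf_left _ inf_le_left

theorem inf_one_sub_bandUnit_eq_zero {a : L} (ha : 0 ≤ a) : a ⊓ (1 - bandUnit a) = 0 := by
  set b := a ⊓ (1 - bandUnit a)
  have hb : 0 ≤ b := le_inf ha (sub_nonneg.2 (bandUnit_le_one a))
  -- `(k + 1) • b ≤ (k + 1) • a ⊓ 1 ≤ bandUnit a ≤ 1 - b`, so `b` is infinitesimal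
  have key : ∀ k : ℕ, k • b ≤ 1 - b := by
    have hle : bandUnit a ≤ 1 - b := le_sub_comm.1 inf_le_right
    intro k
    induction k with
    | zero => simpa using hle.trans' (bandUnit_nonneg a)
    | succ k ih =>
      have h1 : (k + 1) • b ≤ 1 := succ_nsmul b k ▸ le_sub_iff_add_le.1 ih
      exact (le_inf (nsmul_le_nsmul_right inf_le_left _) h1).trans
        (((isLUB_bandUnit a).1 ⟨k + 1, rfl⟩).trans hle)
  exact le_antisymm (le_zero_of_forall_nsmul_le key) hb

theorem bandUnit_mul_self {a : L} (ha : 0 ≤ a) : bandUnit a * bandUnit a = bandUnit a := by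
  have h := mul_eq_zero_of_inf_eq_zero
    (inf_bandUnit_eq_zero (inf_comm a _ ▸ inf_one_sub_bandUnit_eq_zero ha))
  rw [sub_mul, one_mul, sub_eq_zero] at h
  exact h.symm

theorem antitone_bandUnit_posPart_sub_natCast (l : L) :
    Antitone fun n : ℕ => bandUnit (l - n)⁺ := fun _ _ hnm =>
  bandUnit_mono (posPart_mono (sub_le_sub_left (Nat.mono_cast hnm) l))

theorem natCast_mul_bandUnit_posPart_sub_le {l : L} (hl : 0 ≤ l) (n : ℕ) :
    n * bandUnit (l - n)⁺ ≤ l := by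
  set e := bandUnit (l - n)⁺
  have hneg : (l - n)⁻ * e = 0 :=
    mul_eq_zero_of_inf_eq_zero (inf_bandUnit_eq_zero (inf_comm (l - n)⁺ _ ▸
      posPart_inf_negPart_eq_zero (l - n)))
  have h : 0 ≤ (l - n) * e := by
    rw [← posPart_sub_negPart (l - n), sub_mul, hneg, sub_zero]
    exact mul_nonneg (posPart_nonneg _) (bandUnit_nonneg _)
  calc (n : L) * e ≤ l * e := by rw [sub_mul] at h; exact sub_nonneg.1 h
    _ ≤ l := mul_le_of_le_one_right hl (bandUnit_le_one _)

theorem one_sub_bandUnit_posPart_sub_mul_le {l : L} (n : ℕ) :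
    (1 - bandUnit (l - n)⁺) * l ≤ n := by
  set e := bandUnit (l - n)⁺
  have he : 0 ≤ 1 - e := sub_nonneg.2 (bandUnit_le_one _)
  have hpos : (1 - e) * (l - n)⁺ = 0 :=
    mul_eq_zero_of_inf_eq_zero
      (inf_comm (l - n)⁺ _ ▸ inf_one_sub_bandUnit_eq_zero (posPart_nonneg _))
  have h : (1 - e) * (l - n) ≤ 0 := by
    rw [← posPart_sub_negPart (l - n), mul_sub, hpos, zero_sub, neg_nonpos]
    exact mul_nonneg he (negPart_nonneg _)
  calc (1 - e) * l ≤ (1 - e) * n := by rw [mul_sub] at h; exact sub_nonpos.1 h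
    _ ≤ n := mul_le_of_le_one_left (Nat.cast_nonneg n) (sub_le_self _ (bandUnit_nonneg _))

theorem isGLB_bandUnit_posPart_sub_natCast {l : L} (hl : 0 ≤ l) :
    IsGLB (range fun n : ℕ => bandUnit (l - n)⁺) 0 := by
  refine ⟨by rintro _ ⟨n, rfl⟩; exact bandUnit_nonneg _, fun q hq => ?_⟩
  have hq' : ∀ n : ℕ, q⁺ ≤ bandUnit (l - n)⁺ := fun n =>
    sup_le (hq ⟨n, rfl⟩) (bandUnit_nonneg _)
  have key : ∀ n : ℕ, n • q⁺ ≤ l := fun n => by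
    rw [nsmul_eq_mul]
    exact (mul_le_mul_of_nonneg_left (hq' n) (Nat.cast_nonneg n)).trans
      (natCast_mul_bandUnit_posPart_sub_le hl n)
  exact (le_posPart q).trans (le_zero_of_forall_nsmul_le key)

end DFAlgebra

theorem le_zero_of_forall_le_natCast_smul {L Y : Type*} [DFAlgebra L] [AddCommGroup Y]
    [PartialOrder Y] [Module L Y] [PosSMulMono L Y] {κ : Type*} [Nonempty κ] {d : κ → Y}
    (hd : IsGLB (range d) 0) (n : ℕ) {w : Y} (hw : ∀ i, w ≤ (n : L) • d i) : w ≤ 0 := by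
  rcases eq_or_ne n 0 with rfl | hn
  · simpa using hw (Classical.arbitrary κ)
  obtain ⟨c, hc, hcn⟩ := exists_nonneg_mul_natCast_eq_one (L := L) hn
  have hcw : c • w ≤ 0 := hd.2 <| by
    rintro _ ⟨i, rfl⟩
    simpa only [smul_smul, hcn, one_smul] using smul_le_smul_of_nonneg_left (hw i) hc
  simpa only [smul_smul, mul_comm (n : L) c, hcn, one_smul, smul_zero] using
    smul_le_smul_of_nonneg_left hcw (Nat.cast_nonneg (α := L) n)

section OrderContinuity

variable {L Y : Type*} [DFAlgebra L] [AddCommGroup Y] [Lattice Y] [IsOrderedAddMonoid Y]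
  [Module L Y] [PosSMulMono L Y]

theorem eq_zero_of_le_smul_of_isGLB
    (hYParch : ∀ π : ℕ → L, (∀ n, π n * π n = π n) → Antitone π →
      IsGLB (Set.range π) 0 → ∀ y : Y, 0 ≤ y → IsGLB (Set.range fun n => π n • y) 0)
    {l : L} (hl : 0 ≤ l) {κ : Type*} [Nonempty κ] {d : κ → Y} (hd : IsGLB (range d) 0)
    {w : Y} (hw₀ : 0 ≤ w) (hw : ∀ i, w ≤ l • d i) : w = 0 := by
  set π : ℕ → L := fun n => bandUnit (l - n)⁺
  -- `w` lies in the band of every `π n`, since `(1 - π n) • w ≤ n • d i` for all `i`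
  have hπw : ∀ n, π n • w = w := fun n => by
    have h1 : 0 ≤ 1 - π n := sub_nonneg.2 (bandUnit_le_one _)
    have h2 : (1 - π n) • w ≤ 0 := le_zero_of_forall_le_natCast_smul hd n fun i =>
      calc (1 - π n) • w ≤ (1 - π n) • l • d i := smul_le_smul_of_nonneg_left (hw i) h1
        _ = ((1 - π n) * l) • d i := smul_smul _ _ _
        _ ≤ (n : L) • d i := smul_le_smul_of_nonneg_right
          (one_sub_bandUnit_posPart_sub_mul_le n) (hd.1 ⟨i, rfl⟩)
    have h3 : (1 - π n) • w = 0 := le_antisymm h2 (smul_nonneg h1 hw₀)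
    rwa [sub_smul, one_smul, sub_eq_zero, eq_comm] at h3
  have hglb := hYParch π (fun n => bandUnit_mul_self (posPart_nonneg _))
    (antitone_bandUnit_posPart_sub_natCast l) (isGLB_bandUnit_posPart_sub_natCast hl) w hw₀
  exact le_antisymm (hglb.2 <| by rintro _ ⟨n, rfl⟩; exact (hπw n).ge) hw₀

theorem IsLUB.smul_of_nonneg
    (hYParch : ∀ π : ℕ → L, (∀ n, π n * π n = π n) → Antitone π →
      IsGLB (Set.range π) 0 → ∀ y : Y, 0 ≤ y → IsGLB (Set.range fun n => π n • y) 0)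
    {l : L} (hl : 0 ≤ l) {κ : Type*} [Nonempty κ] {y : κ → Y} {s : Y}
    (hs : IsLUB (range y) s) : IsLUB (range fun i => l • y i) (l • s) := by
  refine ⟨by rintro _ ⟨i, rfl⟩; exact smul_le_smul_of_nonneg_left (hs.1 ⟨i, rfl⟩) hl,
    fun u hu => ?_⟩
  have hd : IsGLB (range fun i => s - y i) 0 := by
    refine ⟨by rintro _ ⟨i, rfl⟩; exact sub_nonneg.2 (hs.1 ⟨i, rfl⟩), fun w hw => ?_⟩
    have : s ≤ s - w := hs.2 <| by rintro _ ⟨i, rfl⟩; exact le_sub_comm.1 (hw ⟨i, rfl⟩)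
    simpa using this
  have hu : (l • s - u)⁺ = 0 := eq_zero_of_le_smul_of_isGLB hYParch hl hd (posPart_nonneg _)
    fun i => sup_le (smul_sub l s (y i) ▸ sub_le_sub_left (hu ⟨i, rfl⟩) _)
      (smul_nonneg hl (sub_nonneg.2 (hs.1 ⟨i, rfl⟩)))
  exact sub_nonpos.1 (posPart_eq_zero.1 hu)

end OrderContinuity

theorem IsLUB.add_of_monotone {Y ι : Type*} [AddCommGroup Y] [PartialOrder Y]
    [IsOrderedAddMonoid Y] [Preorder ι] [IsDirected ι (· ≤ ·)] {u v : ι → Y}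
    (hu : Monotone u) (hv : Monotone v) {a b : Y} (ha : IsLUB (range u) a)
    (hb : IsLUB (range v) b) : IsLUB (range fun i => u i + v i) (a + b) := by
  refine (isLUB_congr (subset_antisymm ?_ ?_)).1 (ha.add hb)
  · exact upperBounds_mono_set <| by
      rintro _ ⟨i, rfl⟩
      exact Set.add_mem_add ⟨i, rfl⟩ ⟨i, rfl⟩
  · rintro c hc _ ⟨_, ⟨i, rfl⟩, _, ⟨j, rfl⟩, rfl⟩
    obtain ⟨k, hik, hjk⟩ := exists_ge_ge i j
    exact (add_le_add (hu hik) (hv hjk)).trans (hc ⟨k, rfl⟩)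

theorem exists_linearMap_eq_on_nonneg {R X Y : Type*} [Ring R] [Lattice R]
    [IsOrderedAddMonoid R] [AddCommGroup X] [PartialOrder X] [IsOrderedAddMonoid X]
    [Module R X] [PosSMulMono R X] [AddCommGroup Y] [Module R Y]
    (hXdir : ∀ x : X, ∃ a b : X, 0 ≤ a ∧ 0 ≤ b ∧ x = a - b) {r : X → Y}
    (hadd : ∀ a b : X, 0 ≤ a → 0 ≤ b → r (a + b) = r a + r b)
    (hsmul : ∀ c : R, 0 ≤ c → ∀ a : X, 0 ≤ a → r (c • a) = c • r a) :
    ∃ T : X →ₗ[R] Y, ∀ x : X, 0 ≤ x → T x = r x := by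
  have hwd : ∀ a b c d : X, 0 ≤ a → 0 ≤ b → 0 ≤ c → 0 ≤ d → a - b = c - d →
      r a - r b = r c - r d := fun a b c d ha hb hc hd h => by
    rw [sub_eq_sub_iff_add_eq_add, ← hadd a d ha hd, ← hadd c b hc hb,
      sub_eq_sub_iff_add_eq_add.1 h]
  choose p q hp hq hpq using hXdir
  have hsub {x a b : X} (ha : 0 ≤ a) (hb : 0 ≤ b) (h : x = a - b) :
      r (p x) - r (q x) = r a - r b :=
    hwd _ _ _ _ (hp _) (hq _) ha hb ((hpq _).symm.trans h)
  refine ⟨{ toFun := fun x => r (p x) - r (q x)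
            map_add' := fun x y => ?_
            map_smul' := fun c x => ?_ }, fun x hx => ?_⟩
  · rw [hsub (add_nonneg (hp x) (hp y)) (add_nonneg (hq x) (hq y))
      ((congrArg₂ (· + ·) (hpq x) (hpq y)).trans (by abel)), hadd _ _ (hp x) (hp y),
      hadd _ _ (hq x) (hq y)]
    abel
  · have h₁ {z : X} (hz : 0 ≤ z) : 0 ≤ c⁺ • z := smul_nonneg (posPart_nonneg c) hz
    have h₂ {z : X} (hz : 0 ≤ z) : 0 ≤ c⁻ • z := smul_nonneg (negPart_nonneg c) hz
    have hcx : c • x = (c⁺ • p x + c⁻ • q x) - (c⁺ • q x + c⁻ • p x) := by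
      conv_lhs => rw [hpq x, ← posPart_sub_negPart c]
      simp only [smul_sub, sub_smul]
      abel
    rw [RingHom.id_apply, hsub (add_nonneg (h₁ (hp x)) (h₂ (hq x)))
      (add_nonneg (h₁ (hq x)) (h₂ (hp x))) hcx, hadd _ _ (h₁ (hp x)) (h₂ (hq x)),
      hadd _ _ (h₁ (hq x)) (h₂ (hp x)), hsmul _ (posPart_nonneg c) _ (hp x),
      hsmul _ (negPart_nonneg c) _ (hq x), hsmul _ (posPart_nonneg c) _ (hq x),
      hsmul _ (negPart_nonneg c) _ (hp x)]
    conv_rhs => rw [← posPart_sub_negPart c, sub_smul]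
    simp only [smul_sub]
    abel
  · have h0 : r 0 = 0 := by simpa using hadd 0 0 le_rfl le_rfl
    simp only [LinearMap.coe_mk, AddHom.coe_mk, hsub hx le_rfl (sub_zero x).symm, h0, sub_zero]

theorem POModule.isOrderedAddMonoid (L X : Type*) [DFAlgebra L] [POModule L X] :
    IsOrderedAddMonoid X where
  add_le_add_left a b h c := by
    simpa only [add_comm _ c] using POModule.add_le_add_left (L := L) a b h c

theorem POModule.posSMulMono (L X : Type*) [DFAlgebra L] [POModule L X] : PosSMulMono L X :=
  ⟨fun l hl _ _ h => POModule.smul_le_smul l hl _ _ h⟩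

theorem LVectorLattice.isOrderedAddMonoid (L Y : Type*) [DFAlgebra L] [LVectorLattice L Y] :
    IsOrderedAddMonoid Y where
  add_le_add_left a b h c := by
    simpa only [add_comm _ c] using LVectorLattice.add_le_add_left (L := L) a b h c

theorem LVectorLattice.posSMulMono (L Y : Type*) [DFAlgebra L] [LVectorLattice L Y] :
    PosSMulMono L Y :=
  ⟨fun l hl _ _ h => LVectorLattice.smul_le_smul l hl _ _ h⟩

section OrderBoundedOperators

variable {L X Y : Type*} [DFAlgebra L] [POModule L X] [LVectorLattice L Y]

theorem OrderBounded.of_le_of_le {A B : Lb L X Y} {R : X →ₗ[L] Y}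
    (hA : ∀ x, 0 ≤ x → A.1 x ≤ R x) (hB : ∀ x, 0 ≤ x → R x ≤ B.1 x) :
    OrderBounded L X Y R := by
  have := POModule.isOrderedAddMonoid L X
  have := LVectorLattice.isOrderedAddMonoid L Y
  intro a b
  obtain ⟨c, _, hc⟩ := A.2 0 (b - a)
  obtain ⟨_, d, hd⟩ := B.2 0 (b - a)
  refine ⟨R a + c, R a + d, fun z haz hzb => ?_⟩
  have h₀ : 0 ≤ z - a := sub_nonneg.2 haz
  have h₁ : z - a ≤ b - a := sub_le_sub_right hzb a
  rw [← add_sub_cancel a z, map_add]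
  exact ⟨add_le_add_right ((hc _ h₀ h₁).1.trans (hA _ h₀)) _,
    add_le_add_right ((hB _ h₀).trans (hd _ h₀ h₁).2) _⟩

theorem Lb.exists_forall_isLUB_apply
    (hYded : ∀ S : Set Y, S.Nonempty → BddAbove S → ∃ a : Y, IsLUB S a)
    {ι : Type*} [Nonempty ι] {T : ι → Lb L X Y} {S : Lb L X Y} (hTS : ∀ i, T i ≤ S) :
    ∃ r : X → Y, ∀ x : X, 0 ≤ x → IsLUB (range fun i => (T i).1 x) (r x) := by
  have hsup (x : X) : ∃ y : Y, 0 ≤ x → IsLUB (range fun i => (T i).1 x) y := by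
    by_cases hx : 0 ≤ x
    · obtain ⟨y, hy⟩ := hYded _ (range_nonempty _)
        ⟨S.1 x, by rintro _ ⟨i, rfl⟩; exact hTS i x hx⟩
      exact ⟨y, fun _ => hy⟩
    · exact ⟨0, fun h => absurd h hx⟩
  exact ⟨fun x => (hsup x).choose, fun x => (hsup x).choose_spec⟩

theorem Lb.isLUB_of_forall_isLUB_apply {ι : Type*} {T : ι → Lb L X Y} {S : Lb L X Y}
    (h : ∀ x : X, 0 ≤ x → IsLUB (range fun i => (T i).1 x) (S.1 x)) : IsLUB (range T) S :=
  ⟨by rintro _ ⟨i, rfl⟩ x hx; exact (h x hx).1 ⟨i, rfl⟩,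
    fun U hU x hx => (h x hx).2 <| by rintro _ ⟨i, rfl⟩; exact hU ⟨i, rfl⟩ x hx⟩

end OrderBoundedOperators

open Pointwise
theorem stmt17_general (L X Y : Type*) [DFAlgebra L] [POModule L X] [LVectorLattice L Y]
    (hXdir : ∀ x : X, ∃ a b : X, 0 ≤ a ∧ 0 ≤ b ∧ x = a - b)
    (hYded : ∀ S : Set Y, S.Nonempty → BddAbove S → ∃ a : Y, IsLUB S a)
    (hYParch : ∀ π : ℕ → L, (∀ n, π n * π n = π n) → Antitone π →
      IsGLB (Set.range π) 0 → ∀ y : Y, 0 ≤ y → IsGLB (Set.range fun n => π n • y) 0)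
    {ι : Type*} [Preorder ι] [Nonempty ι] [IsDirected ι (· ≤ ·)]
    (T : ι → Lb L X Y) (hT : Monotone T) (S : Lb L X Y) :
    IsLUB (Set.range T) S ↔
      ∀ x : X, 0 ≤ x → IsLUB (Set.range fun i => (T i).1 x) (S.1 x) := by
  refine ⟨fun hS => ?_, Lb.isLUB_of_forall_isLUB_apply⟩
  have := POModule.isOrderedAddMonoid L X
  have := POModule.posSMulMono L X
  have := LVectorLattice.isOrderedAddMonoid L Y
  have := LVectorLattice.posSMulMono L Y
  have hTS (i : ι) : T i ≤ S := hS.1 ⟨i, rfl⟩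
  obtain ⟨r, hr⟩ := Lb.exists_forall_isLUB_apply hYded hTS
  have hmono {x : X} (hx : 0 ≤ x) : Monotone fun i => (T i).1 x := fun _ _ hij => hT hij x hx
  obtain ⟨R, hR⟩ := exists_linearMap_eq_on_nonneg hXdir (r := r)
    (fun a b ha hb => (hr _ (add_nonneg ha hb)).unique <| by
      simpa only [map_add] using (hr a ha).add_of_monotone (hmono ha) (hmono hb) (hr b hb))
    (fun l hl a ha => (hr _ (smul_nonneg hl ha)).unique <| by
      convert (hr a ha).smul_of_nonneg hYParch hl using 3 with i
      exact map_smul (T i).1 l a)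
  have hTR (i : ι) (x : X) (hx : 0 ≤ x) : (T i).1 x ≤ R x :=
    hR x hx ▸ (hr x hx).1 ⟨i, rfl⟩
  have hRS (x : X) (hx : 0 ≤ x) : R x ≤ S.1 x :=
    hR x hx ▸ (hr x hx).2 (by rintro _ ⟨i, rfl⟩; exact hTS i x hx)
  have hSR : S ≤ ⟨R, .of_le_of_le (hTR (Classical.arbitrary ι)) hRS⟩ :=
    hS.2 <| by rintro _ ⟨i, rfl⟩; exact hTR i
  intro x hx
  have hSx : S.1 x = r x := (le_antisymm (hSR x hx) (hRS x hx)).trans (hR x hx)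
  exact hSx ▸ hr x hx

/-- For an increasing net (T_α) in L_b(X,Y): T_α ↑ T iff T_α(x) ↑ T(x) for each
x ∈ X⁺. -/
theorem stmt17 (L X Y : Type*) [DFAlgebra L] [POModule L X] [LVectorLattice L Y]
    (hXdir : ∀ x : X, ∃ a b : X, 0 ≤ a ∧ 0 ≤ b ∧ x = a - b)
    (hRDP : ∀ x y : X, 0 ≤ x → 0 ≤ y →
      Set.Icc (0 : X) (x + y) = Set.Icc (0 : X) x + Set.Icc (0 : X) y)
    (hYded : ∀ S : Set Y, S.Nonempty → BddAbove S → ∃ a : Y, IsLUB S a)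
    (hYParch : ∀ π : ℕ → L, (∀ n, π n * π n = π n) → Antitone π →
      IsGLB (Set.range π) 0 → ∀ y : Y, 0 ≤ y → IsGLB (Set.range fun n => π n • y) 0)
    {ι : Type*} [Preorder ι] [Nonempty ι] [IsDirected ι (· ≤ ·)]
    (T : ι → Lb L X Y) (hT : Monotone T) (S : Lb L X Y) :
    IsLUB (Set.range T) S ↔
      ∀ x : X, 0 ≤ x → IsLUB (Set.range fun i => (T i).1 x) (S.1 x) :=
  stmt17_general L X Y hXdir hYded hYParch T hT S
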